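/- (Theorem 5, part 1.) Consider a compound geometrically uniform state set with linearly independent states and equal prior probabilities η_{g,k} = 1/(|G|·r). Let S denote the positive semidefinite square root of the Gram matrix ΦᴴΦ and let q be the number of distinct eigenvalues of ΦᴴΦ. If there exist real constants a_1,…,a_q such that for every generator index k and every 1 ≤ t ≤ q the diagonal entry of S^t at the index (e,k) equals a_t (independent of k), where e is the identity of G — equivalently, ⟨ψ_k, (ΦΦᴴ)^{t/2−1} ψ_k⟩ = a_t for all k, t — then the equal-probability measurement is optimal: the constant vector p = λ_min is primal feasible, and (1/(|G|·r))·Σ_{g,k} p_{g,k} ≤ λ_min for every primal feasible p, where λ_min is the smallest eigenvalue of ΦᴴΦ. -/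

import Mathlib

/-!
Feasibility of the equal-probability measurement is a sum-of-squares identity: with
`R = Φ (ΦᴴΦ)⁻¹` and `P = Φ Rᴴ` the orthogonal projection onto the range of `Φ`,
`1 - λ R Rᴴ = (1 - P)ᴴ (1 - P) + R (ΦᴴΦ - λ) Rᴴ`.

For optimality, conjugating by `Φ` turns primal feasibility of `p` into `ΦᴴΦ - diag p ⪰ 0`
(because `Φᴴ R = 1`). Pair this with the spectral projection `E` of `ΦᴴΦ` at `λ`:
`0 ≤ tr ((ΦᴴΦ - diag p) E) = λ tr E - ∑ p_i E_ii`. Lagrange interpolation on the `q` points of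
the spectrum of `S` writes `E` as a combination of `S^0, …, S^(q-1)`, and each of these has
constant diagonal: along `G`-orbits because `S`, the unique positive square root of the
`G`-invariant Gram matrix, is itself `G`-invariant, and across generators by hypothesis.
Hence `E_ii = tr E / (|G| r) > 0` for all `i`, and `∑ p ≤ λ |G| r`.
-/

open Matrix BigOperators ComplexOrder

noncomputable section

/-- The matrix whose column indexed by `(g, k)` is the CGU state `ρ(g) ψ_k`. -/
def cguMatrix {G : Type*} [Group G] [Fintype G] (n r : ℕ)
    (ρ : G →* Matrix.unitaryGroup (Fin n) ℂ) (ψ : Fin r → Fin n → ℂ) :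
    Matrix (Fin n) (G × Fin r) ℂ :=
  Matrix.of fun j gk => ((ρ gk.1 : Matrix (Fin n) (Fin n) ℂ).mulVec (ψ gk.2)) j

/-- The reciprocal states: columns of `Φ (ΦᴴΦ)⁻¹`. -/
def cguReciprocal {G : Type*} [Group G] [Fintype G] [DecidableEq G] (n r : ℕ)
    (ρ : G →* Matrix.unitaryGroup (Fin n) ℂ) (ψ : Fin r → Fin n → ℂ) :
    Matrix (Fin n) (G × Fin r) ℂ :=
  cguMatrix n r ρ ψ * ((cguMatrix n r ρ ψ)ᴴ * cguMatrix n r ρ ψ)⁻¹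

/-- The rank-one operator `Q_{g,k} = φ̃_{g,k} φ̃_{g,k}ᴴ`. -/
def cguQop {G : Type*} [Group G] [Fintype G] [DecidableEq G] (n r : ℕ)
    (ρ : G →* Matrix.unitaryGroup (Fin n) ℂ) (ψ : Fin r → Fin n → ℂ) (gk : G × Fin r) :
    Matrix (Fin n) (Fin n) ℂ :=
  vecMulVec (fun a => cguReciprocal n r ρ ψ a gk) (fun b => star (cguReciprocal n r ρ ψ b gk))

/-- Primal feasibility for the CGU unambiguous-discrimination SDP. -/
def cguPrimalFeasible {G : Type*} [Group G] [Fintype G] [DecidableEq G] (n r : ℕ)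
    (ρ : G →* Matrix.unitaryGroup (Fin n) ℂ) (ψ : Fin r → Fin n → ℂ)
    (p : G × Fin r → ℝ) : Prop :=
  (∀ gk, 0 ≤ p gk) ∧
    ((1 : Matrix (Fin n) (Fin n) ℂ) -
      ∑ gk : G × Fin r, (p gk : ℂ) • cguQop n r ρ ψ gk).PosSemidef

open scoped MatrixOrder

section Interpolation

variable {A : Type*} [Ring A] [StarRing A] [TopologicalSpace A] [Algebra ℝ A]
  {p : A → Prop} [ContinuousFunctionalCalculus ℝ A p]

open Polynomial in
theorem cfc_eq_sum_range_smul_pow {a : A} (ha : p a) (hfin : (spectrum ℝ a).Finite)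
    (f : ℝ → ℝ) : ∃ c : ℕ → ℝ,
      cfc f a = ∑ t ∈ Finset.range (spectrum ℝ a).ncard, c t • a ^ t := by
  set P : ℝ[X] := Lagrange.interpolate hfin.toFinset id f
  have hdeg : P.degree < (spectrum ℝ a).ncard := by
    rw [Set.ncard_eq_toFinset_card _ hfin]
    exact Lagrange.degree_interpolate_lt _ Function.injective_id.injOn
  have hP : cfc f a = aeval a P := by
    rw [← cfc_polynomial P a]
    exact cfc_congr fun x hx => (Lagrange.eval_interpolate_at_node f
      Function.injective_id.injOn (hfin.mem_toFinset.mpr hx)).symm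
  refine ⟨P.coeff, ?_⟩
  rcases eq_or_ne P 0 with hP0 | hP0
  · simp [hP, hP0]
  · rw [hP, aeval_eq_sum_range' ((natDegree_lt_iff_degree_lt hP0).mpr hdeg)]

end Interpolation

namespace Matrix

variable {ι m : Type*} [Fintype ι] [DecidableEq ι]

theorem mem_spectrum_real_of_mulVec_eq_smul {A : Matrix ι ι ℂ} {μ : ℝ} {u : ι → ℂ}
    (hu : u ≠ 0) (hAu : A *ᵥ u = (μ : ℂ) • u) : μ ∈ spectrum ℝ A := by
  rw [spectrum.mem_iff, isUnit_iff_isUnit_det]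
  refine fun hdet => hdet.ne_zero (exists_mulVec_eq_zero_iff.mp ⟨u, hu, ?_⟩)
  rw [sub_mulVec, hAu, Algebra.algebraMap_eq_smul_one, smul_mulVec, one_mulVec]
  simp

theorem IsHermitian.ncard_spectrum_complex_eq_real {A : Matrix ι ι ℂ} (hA : A.IsHermitian) :
    (spectrum ℂ A).ncard = (spectrum ℝ A).ncard := by
  rw [hA.spectrum_eq_image_range, ← hA.spectrum_real_eq_range_eigenvalues]
  exact Set.ncard_image_of_injective _ Complex.ofReal_injective

theorem PosSemidef.ncard_spectrum_sq {S : Matrix ι ι ℂ} (hS : S.PosSemidef) :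
    (spectrum ℝ (S ^ 2)).ncard = (spectrum ℝ S).ncard := by
  rw [← cfc_pow_id (R := ℝ) S 2 hS.isHermitian.isSelfAdjoint,
    cfc_map_spectrum _ _ hS.isHermitian.isSelfAdjoint]
  refine Set.InjOn.ncard_image fun x hx y hy hxy => ?_
  exact (pow_left_inj₀ (spectrum_nonneg_of_nonneg hS.nonneg hx)
    (spectrum_nonneg_of_nonneg hS.nonneg hy) two_ne_zero).mp hxy

theorem PosSemidef.exists_cfc_sq_eq_sum_range_smul_pow {S : Matrix ι ι ℂ} (hS : S.PosSemidef)
    (f : ℝ → ℝ) : ∃ c : ℕ → ℝ,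
      cfc f (S ^ 2) = ∑ t ∈ Finset.range (spectrum ℝ S).ncard, c t • S ^ t := by
  rw [← cfc_comp_pow f 2 S ((finite_real_spectrum.image _).continuousOn _)
    hS.isHermitian.isSelfAdjoint]
  exact cfc_eq_sum_range_smul_pow hS.isHermitian.isSelfAdjoint finite_real_spectrum _

theorem PosSemidef.pow_submatrix_eq_of_mul_self {S : Matrix ι ι ℂ} (hS : S.PosSemidef)
    {e : ι ≃ ι} (he : (S * S).submatrix e e = S * S) (t : ℕ) :
    (S ^ t).submatrix e e = S ^ t := by
  have hSe : S.submatrix e e = S := by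
    refine (CFC.sq_eq_sq_iff _ _ (hS.submatrix e).nonneg hS.nonneg).mp ?_
    rw [sq, sq, submatrix_mul_equiv, he]
  have hreindex : ∀ M : Matrix ι ι ℂ, reindexAlgEquiv ℂ ℂ e.symm M = M.submatrix e e := by
    simp [coe_reindexAlgEquiv]
  rw [← hreindex, map_pow, hreindex, hSe]

section Eigenprojection

variable {Γ : Matrix ι ι ℂ} (μ : ℝ)

theorem cfc_indicator_mul_self :
    cfc (Set.indicator {μ} 1) Γ * cfc (Set.indicator {μ} 1) Γ = cfc (Set.indicator {μ} 1) Γ := by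
  rw [← cfc_mul _ _ Γ (finite_real_spectrum.continuousOn _) (finite_real_spectrum.continuousOn _)]
  refine cfc_congr fun x _ => ?_
  by_cases hx : x = μ <;> simp [hx]

theorem posSemidef_cfc_indicator : (cfc (Set.indicator {μ} 1) Γ).PosSemidef :=
  nonneg_iff_posSemidef.mp (cfc_nonneg fun x _ => Set.indicator_nonneg (fun _ _ => zero_le_one) x)

variable (hΓ : Γ.IsHermitian)
include hΓ

theorem IsHermitian.mul_cfc_indicator :
    Γ * cfc (Set.indicator {μ} 1) Γ = μ • cfc (Set.indicator {μ} 1) Γ := by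
  calc Γ * cfc (Set.indicator {μ} 1) Γ = cfc id Γ * cfc (Set.indicator {μ} 1) Γ := by
        rw [cfc_id ℝ Γ hΓ.isSelfAdjoint]
    _ = μ • cfc (Set.indicator {μ} 1) Γ := by
        rw [← cfc_mul _ _ Γ (finite_real_spectrum.continuousOn _)
          (finite_real_spectrum.continuousOn _),
          ← cfc_smul _ _ Γ (finite_real_spectrum.continuousOn _)]
        refine cfc_congr fun x _ => ?_
        by_cases hx : x = μ <;> simp [hx]

theorem IsHermitian.cfc_indicator_ne_zero (hμ : μ ∈ spectrum ℝ Γ) :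
    cfc (Set.indicator {μ} 1) Γ ≠ 0 := by
  intro h
  rw [← cfc_zero ℝ Γ] at h
  simpa using eqOn_of_cfc_eq_cfc h (finite_real_spectrum.continuousOn _)
    (finite_real_spectrum.continuousOn _) hΓ.isSelfAdjoint hμ

end Eigenprojection

omit [DecidableEq ι] in
theorem PosSemidef.trace_mul_nonneg_of_idempotent {A P : Matrix ι ι ℂ} (hA : A.PosSemidef)
    (hP : P.IsHermitian) (hPP : P * P = P) : 0 ≤ (A * P).trace := by
  have h := (hA.conjTranspose_mul_mul_same P).trace_nonneg
  rwa [hP.eq, trace_mul_cycle, hPP, trace_mul_comm] at h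

theorem sum_le_mul_card_of_posSemidef_sub_diagonal {Γ E : Matrix ι ι ℂ} {d : ι → ℝ} {μ : ℝ}
    (hΓd : (Γ - diagonal fun i => (d i : ℂ)).PosSemidef) (hE : E.PosSemidef) (hEE : E * E = E)
    (hE0 : E ≠ 0) (hΓE : Γ * E = μ • E) (hdiag : ∀ i j, E i i = E j j) :
    ∑ i, d i ≤ μ * Fintype.card ι := by
  obtain ⟨i₀⟩ : Nonempty ι := by
    by_contra h
    exact hE0 (ext fun i => (not_nonempty_iff.mp h).elim i)
  set c : ℝ := (E i₀ i₀).re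
  have hdiag' : ∀ i, E i i = c := fun i =>
    (hdiag i i₀).trans (hE.isHermitian.coe_re_apply_self i₀).symm
  have htrE : E.trace = (Fintype.card ι * c : ℝ) := by
    simp [trace, hdiag']
  have hc : 0 < c := by
    have hpos : 0 < E.trace := hE.trace_nonneg.lt_of_ne' ((hE.trace_eq_zero_iff).not.mpr hE0)
    rw [htrE, Complex.zero_lt_real] at hpos
    exact pos_of_mul_pos_right hpos (by positivity)
  have htr : ((Γ - diagonal fun i => (d i : ℂ)) * E).trace
      = (c * (μ * Fintype.card ι - ∑ i, d i) : ℝ) := by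
    have hDE : (diagonal (fun i => (d i : ℂ)) * E).trace = (∑ i, (d i : ℂ)) * c := by
      rw [Finset.sum_mul]
      exact Finset.sum_congr rfl fun i _ => by rw [diag_apply, diagonal_mul, hdiag']
    rw [sub_mul, trace_sub, hΓE, trace_smul, htrE, hDE, Complex.real_smul]
    push_cast
    ring
  have h := hΓd.trace_mul_nonneg_of_idempotent hE.isHermitian hEE
  rw [htr, Complex.zero_le_real] at h
  linarith [nonneg_of_mul_nonneg_right h hc]

theorem sum_smul_vecMulVec_col (R : Matrix m ι ℂ) (p : ι → ℂ) :
    ∑ j, p j • vecMulVec (fun a => R a j) (fun b => star (R b j)) = R * diagonal p * Rᴴ := by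
  ext a b
  simp [sum_apply, vecMulVec_apply, mul_apply, diagonal_apply, mul_assoc, mul_left_comm]

theorem posSemidef_one_sub_smul_mul_conjTranspose [Fintype m] [DecidableEq m]
    {Φ R : Matrix m ι ℂ} {μ : ℝ}
    (hR : R * (Φᴴ * Φ) = Φ) (hμ : (Φᴴ * Φ - (μ : ℂ) • 1).PosSemidef) :
    (1 - (μ : ℂ) • (R * Rᴴ)).PosSemidef := by
  have hRΦ : R * Φᴴ = Φ * Rᴴ := by
    have hΦ : Φᴴ = Φᴴ * Φ * Rᴴ := by
      conv_lhs => rw [← hR]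
      rw [conjTranspose_mul, (isHermitian_conjTranspose_mul_self Φ).eq]
    rw [hΦ, ← Matrix.mul_assoc, hR]
  have hsos : (1 - Φ * Rᴴ)ᴴ * (1 - Φ * Rᴴ) + R * (Φᴴ * Φ - (μ : ℂ) • 1) * Rᴴ
      = 1 - (μ : ℂ) • (R * Rᴴ) := by
    have hP : Φ * Rᴴ * (Φ * Rᴴ) = Φ * Rᴴ := by
      nth_rw 1 [← hRΦ]
      rw [Matrix.mul_assoc, ← Matrix.mul_assoc Φᴴ, ← Matrix.mul_assoc, hR]
    have hRΓR : R * (Φᴴ * Φ - (μ : ℂ) • 1) * Rᴴ = Φ * Rᴴ - (μ : ℂ) • (R * Rᴴ) := by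
      rw [Matrix.mul_sub, Matrix.sub_mul, hR, Matrix.mul_smul, Matrix.mul_one, Matrix.smul_mul]
    rw [conjTranspose_sub, conjTranspose_one, conjTranspose_mul, conjTranspose_conjTranspose, hRΦ,
      Matrix.sub_mul, Matrix.mul_sub, Matrix.mul_sub, hP, hRΓR]
    simp only [Matrix.one_mul, Matrix.mul_one]
    abel
  exact hsos ▸ (posSemidef_conjTranspose_mul_self _).add (hμ.mul_mul_conjTranspose_same R)

end Matrix

section CGU

variable {G : Type*} [Group G] [Fintype G] [DecidableEq G] {n r : ℕ}
  {ρ : G →* Matrix.unitaryGroup (Fin n) ℂ} {ψ : Fin r → Fin n → ℂ}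

omit [DecidableEq G] in
theorem cguMatrix_submatrix_mulLeft (g : G) :
    (cguMatrix n r ρ ψ).submatrix id ((Equiv.mulLeft g).prodCongr (Equiv.refl (Fin r)))
      = (ρ g : Matrix (Fin n) (Fin n) ℂ) * cguMatrix n r ρ ψ := by
  ext j x
  change ((ρ (g * x.1) : Matrix (Fin n) (Fin n) ℂ) *ᵥ ψ x.2) j = _
  rw [map_mul, Submonoid.coe_mul, ← mulVec_mulVec]
  rfl

omit [DecidableEq G] in
theorem cguGram_submatrix_mulLeft (g : G) :
    ((cguMatrix n r ρ ψ)ᴴ * cguMatrix n r ρ ψ).submatrix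
        ((Equiv.mulLeft g).prodCongr (Equiv.refl (Fin r)))
        ((Equiv.mulLeft g).prodCongr (Equiv.refl (Fin r)))
      = (cguMatrix n r ρ ψ)ᴴ * cguMatrix n r ρ ψ := by
  rw [← submatrix_mul_equiv _ _ _ (Equiv.refl (Fin n)), ← conjTranspose_submatrix]
  simp only [Equiv.coe_refl]
  rw [cguMatrix_submatrix_mulLeft, conjTranspose_mul, Matrix.mul_assoc,
    ← Matrix.mul_assoc _ (ρ g : Matrix (Fin n) (Fin n) ℂ), ← star_eq_conjTranspose,
    Unitary.coe_star_mul_self, Matrix.one_mul]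

theorem cguGram_sqrt_pow_apply_self_eq {S : Matrix (G × Fin r) (G × Fin r) ℂ} (hS : S.PosSemidef)
    (hSsq : S * S = (cguMatrix n r ρ ψ)ᴴ * cguMatrix n r ρ ψ) {q : ℕ} {a : Fin q → ℝ}
    (ha : ∀ (k : Fin r) (t : Fin q), (S ^ (t.1 + 1)) ((1 : G), k) ((1 : G), k) = ((a t : ℝ) : ℂ))
    {t : ℕ} (ht : t ≤ q) (x y : G × Fin r) : (S ^ t) x x = (S ^ t) y y := by
  have hshift : ∀ z : G × Fin r, (S ^ t) z z = (S ^ t) (1, z.2) (1, z.2) := fun z => by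
    have hinv := hS.pow_submatrix_eq_of_mul_self
      (by rw [hSsq]; exact cguGram_submatrix_mulLeft z.1) t
    simpa using congrFun (congrFun hinv (1, z.2)) (1, z.2)
  rw [hshift x, hshift y]
  rcases t with _ | s
  · simp
  · rw [ha x.2 ⟨s, ht⟩, ha y.2 ⟨s, ht⟩]

theorem cguGram_eigenprojection_apply_self_eq {S : Matrix (G × Fin r) (G × Fin r) ℂ}
    (hS : S.PosSemidef) (hSsq : S * S = (cguMatrix n r ρ ψ)ᴴ * cguMatrix n r ρ ψ) {q : ℕ}
    (hq : q = (spectrum ℂ ((cguMatrix n r ρ ψ)ᴴ * cguMatrix n r ρ ψ)).ncard) {a : Fin q → ℝ}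
    (ha : ∀ (k : Fin r) (t : Fin q), (S ^ (t.1 + 1)) ((1 : G), k) ((1 : G), k) = ((a t : ℝ) : ℂ))
    (μ : ℝ) (x y : G × Fin r) :
    cfc (Set.indicator {μ} 1) ((cguMatrix n r ρ ψ)ᴴ * cguMatrix n r ρ ψ) x x
      = cfc (Set.indicator {μ} 1) ((cguMatrix n r ρ ψ)ᴴ * cguMatrix n r ρ ψ) y y := by
  obtain ⟨c, hc⟩ := hS.exists_cfc_sq_eq_sum_range_smul_pow (Set.indicator {μ} 1)
  have hcard : (spectrum ℝ S).ncard = q := by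
    rw [hq, (isHermitian_conjTranspose_mul_self _).ncard_spectrum_complex_eq_real, ← hSsq, ← sq,
      hS.ncard_spectrum_sq]
  rw [sq, hSsq, hcard] at hc
  simp only [hc, Matrix.sum_apply, Matrix.smul_apply]
  exact Finset.sum_congr rfl fun t ht => by
    rw [cguGram_sqrt_pow_apply_self_eq hS hSsq ha (Finset.mem_range.mp ht).le x y]

theorem isUnit_det_cguGram (hind : LinearIndependent ℂ (fun gk : G × Fin r =>
      (ρ gk.1 : Matrix (Fin n) (Fin n) ℂ).mulVec (ψ gk.2))) :
    IsUnit ((cguMatrix n r ρ ψ)ᴴ * cguMatrix n r ρ ψ).det :=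
  (isUnit_iff_isUnit_det _).mp
    (PosDef.conjTranspose_mul_self _ (mulVec_injective_iff.mpr hind)).isUnit

theorem sum_smul_cguQop (p : G × Fin r → ℂ) :
    ∑ gk, p gk • cguQop n r ρ ψ gk
      = cguReciprocal n r ρ ψ * diagonal p * (cguReciprocal n r ρ ψ)ᴴ :=
  sum_smul_vecMulVec_col _ p

variable (hΓ : IsUnit ((cguMatrix n r ρ ψ)ᴴ * cguMatrix n r ρ ψ).det)
include hΓ

theorem cguReciprocal_mul_gram :
    cguReciprocal n r ρ ψ * ((cguMatrix n r ρ ψ)ᴴ * cguMatrix n r ρ ψ) = cguMatrix n r ρ ψ := by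
  rw [cguReciprocal, Matrix.mul_assoc, nonsing_inv_mul _ hΓ, Matrix.mul_one]

theorem conjTranspose_cguMatrix_mul_cguReciprocal :
    (cguMatrix n r ρ ψ)ᴴ * cguReciprocal n r ρ ψ = 1 := by
  rw [cguReciprocal, ← Matrix.mul_assoc, mul_nonsing_inv _ hΓ]

theorem cguPrimalFeasible.posSemidef_gram_sub_diagonal {p : G × Fin r → ℝ}
    (hp : cguPrimalFeasible n r ρ ψ p) :
    ((cguMatrix n r ρ ψ)ᴴ * cguMatrix n r ρ ψ - diagonal fun gk => (p gk : ℂ)).PosSemidef := by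
  set Φ := cguMatrix n r ρ ψ
  set R := cguReciprocal n r ρ ψ
  have hR : Φᴴ * R = 1 := conjTranspose_cguMatrix_mul_cguReciprocal hΓ
  have hR' : Rᴴ * Φ = 1 := by simpa using congrArg conjTranspose hR
  have heq : Φᴴ * (R * (diagonal fun gk => (p gk : ℂ)) * Rᴴ) * Φ = diagonal fun gk => (p gk : ℂ) :=
    calc _ = Φᴴ * R * (diagonal fun gk => (p gk : ℂ)) * (Rᴴ * Φ) := by
          simp only [Matrix.mul_assoc]
      _ = _ := by rw [hR, hR', Matrix.one_mul, Matrix.mul_one]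
  have h := hp.2.conjTranspose_mul_mul_same Φ
  rwa [sum_smul_cguQop, Matrix.mul_sub, Matrix.sub_mul, Matrix.mul_one, heq] at h

theorem cguPrimalFeasible_const {μ : ℝ} (hμ0 : 0 ≤ μ)
    (hμ : ((cguMatrix n r ρ ψ)ᴴ * cguMatrix n r ρ ψ - (μ : ℂ) • 1).PosSemidef) :
    cguPrimalFeasible n r ρ ψ fun _ => μ := by
  refine ⟨fun _ => hμ0, ?_⟩
  rw [sum_smul_cguQop, ← smul_one_eq_diagonal, Matrix.mul_smul, Matrix.mul_one, Matrix.smul_mul]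
  exact posSemidef_one_sub_smul_mul_conjTranspose (cguReciprocal_mul_gram hΓ) hμ

end CGU

theorem stmt_18_general {G : Type*} [Group G] [Fintype G] [DecidableEq G] (n r : ℕ)
    (ρ : G →* Matrix.unitaryGroup (Fin n) ℂ) (ψ : Fin r → Fin n → ℂ)
    (hind : LinearIndependent ℂ (fun gk : G × Fin r =>
      (ρ gk.1 : Matrix (Fin n) (Fin n) ℂ).mulVec (ψ gk.2)))
    (lam : ℝ)
    -- `lam` is the smallest eigenvalue of the Gram matrix `ΦᴴΦ`:
    (hev : ∃ u : G × Fin r → ℂ, u ≠ 0 ∧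
      ((cguMatrix n r ρ ψ)ᴴ * cguMatrix n r ρ ψ).mulVec u = (lam : ℂ) • u)
    (hmin : (((cguMatrix n r ρ ψ)ᴴ * cguMatrix n r ρ ψ) - (lam : ℂ) • 1).PosSemidef)
    -- `S` is the positive semidefinite square root of the Gram matrix:
    (S : Matrix (G × Fin r) (G × Fin r) ℂ) (hS : S.PosSemidef)
    (hSsq : S * S = (cguMatrix n r ρ ψ)ᴴ * cguMatrix n r ρ ψ)
    -- `q` is the number of distinct eigenvalues of the Gram matrix:
    (q : ℕ) (hq : q = (spectrum ℂ ((cguMatrix n r ρ ψ)ᴴ * cguMatrix n r ρ ψ)).ncard)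
    (a : Fin q → ℝ)
    -- the diagonal entries of `S^t` at generator indices are independent of `k`:
    (ha : ∀ (k : Fin r) (t : Fin q),
      (S ^ (t.1 + 1)) ((1 : G), k) ((1 : G), k) = ((a t : ℝ) : ℂ)) :
    cguPrimalFeasible n r ρ ψ (fun _ => lam) ∧
      ∀ p : G × Fin r → ℝ, cguPrimalFeasible n r ρ ψ p →
        (1 / ((Fintype.card G : ℝ) * r)) * ∑ gk : G × Fin r, p gk ≤ lam := by
  set Φ := cguMatrix n r ρ ψ
  have hΓ : IsUnit (Φᴴ * Φ).det := isUnit_det_cguGram hind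
  have hΓH : (Φᴴ * Φ).IsHermitian := isHermitian_conjTranspose_mul_self Φ
  obtain ⟨u, hu, hΓu⟩ := hev
  have hspec : lam ∈ spectrum ℝ (Φᴴ * Φ) := mem_spectrum_real_of_mulVec_eq_smul hu hΓu
  have hlam : 0 ≤ lam :=
    spectrum_nonneg_of_nonneg (posSemidef_conjTranspose_mul_self Φ).nonneg hspec
  refine ⟨cguPrimalFeasible_const hΓ hlam hmin, fun p hp => ?_⟩
  have hsum := sum_le_mul_card_of_posSemidef_sub_diagonal (hp.posSemidef_gram_sub_diagonal hΓ)
    (posSemidef_cfc_indicator lam) (cfc_indicator_mul_self lam)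
    (hΓH.cfc_indicator_ne_zero lam hspec) (hΓH.mul_cfc_indicator lam)
    (cguGram_eigenprojection_apply_self_eq hS hSsq hq ha lam)
  rw [Fintype.card_prod, Fintype.card_fin, Nat.cast_mul] at hsum
  rw [one_div_mul_eq_div]
  exact div_le_of_le_mul₀ (by positivity) hlam hsum

theorem stmt_18 {G : Type*} [Group G] [Fintype G] [DecidableEq G] (n r : ℕ) (hr : 0 < r)
    (ρ : G →* Matrix.unitaryGroup (Fin n) ℂ) (ψ : Fin r → Fin n → ℂ)
    (hind : LinearIndependent ℂ (fun gk : G × Fin r =>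
      (ρ gk.1 : Matrix (Fin n) (Fin n) ℂ).mulVec (ψ gk.2)))
    (lam : ℝ)
    -- `lam` is the smallest eigenvalue of the Gram matrix `ΦᴴΦ`:
    (hev : ∃ u : G × Fin r → ℂ, u ≠ 0 ∧
      ((cguMatrix n r ρ ψ)ᴴ * cguMatrix n r ρ ψ).mulVec u = (lam : ℂ) • u)
    (hmin : (((cguMatrix n r ρ ψ)ᴴ * cguMatrix n r ρ ψ) - (lam : ℂ) • 1).PosSemidef)
    -- `S` is the positive semidefinite square root of the Gram matrix:
    (S : Matrix (G × Fin r) (G × Fin r) ℂ) (hS : S.PosSemidef)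
    (hSsq : S * S = (cguMatrix n r ρ ψ)ᴴ * cguMatrix n r ρ ψ)
    -- `q` is the number of distinct eigenvalues of the Gram matrix:
    (q : ℕ) (hq : q = (spectrum ℂ ((cguMatrix n r ρ ψ)ᴴ * cguMatrix n r ρ ψ)).ncard)
    (a : Fin q → ℝ)
    -- the diagonal entries of `S^t` at generator indices are independent of `k`:
    (ha : ∀ (k : Fin r) (t : Fin q),
      (S ^ (t.1 + 1)) ((1 : G), k) ((1 : G), k) = ((a t : ℝ) : ℂ)) :
    cguPrimalFeasible n r ρ ψ (fun _ => lam) ∧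
      ∀ p : G × Fin r → ℝ, cguPrimalFeasible n r ρ ψ p →
        (1 / ((Fintype.card G : ℝ) * r)) * ∑ gk : G × Fin r, p gk ≤ lam :=
  stmt_18_general n r ρ ψ hind lam hev hmin S hS hSsq q hq a ha
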